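/- arXiv:2304.06694 — 3 statements merged into one kernel-verified Lean document; each statement's English description precedes it below -/
import Mathlib

section
/- Let g_k, g_{k-1}, d_{k-1} ∈ ℝ^n with g_{k-1}^T d_{k-1} < 0, σ ∈ (0, 1/2), strong Wolfe curvature condition |g_k^T d_{k-1}| ≤ σ|g_{k-1}^T d_{k-1}|, and d_{k-1}^T y_{k-1} > 0 where y_{k-1} = g_k - g_{k-1}. Define μ > 0 and β = (‖g_k‖² − μ|g_k^T g_{k-1}|)/(d_{k-1}^T y_{k-1}) − (μ/α)·(g_k^T s_{k-1})/(d_{k-1}^T y_{k-1}) with s_{k-1} = α d_{k-1}, α > 0. If ‖g_k‖² > μ|g_k^T g_{k-1}|, then the direction d_k = −g_k + β d_{k-1} satisfies g_k^T d_k ≤ −c‖g_k‖² where c = 1 − σ/(1−σ) > 0. -/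
open scoped RealInnerProductSpace

lemma stmt_2_aux (σ μ p t D G c : ℝ) (hσ0 : 0 < σ) (hσ2 : σ < 1/2)
    (hμ : 0 < μ) (hp : p < 0) (habs : |t| ≤ σ * |p|) (hD : 0 < D)
    (hDval : D = t - p) (hG : 0 ≤ G)
    (t' : ℝ) (hA0 : 0 < G - μ * |t'|) (hc : c = 1 - σ / (1 - σ)) :
    -G + ((G - μ * |t'|) - μ * t) * t / D ≤ -c * G ∧ 0 < c := by
  have h1σ : 0 < 1 - σ := by linarith
  set A := G - μ * |t'| with hA
  have hAG : A ≤ G := by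
    have : 0 ≤ μ * |t'| := mul_nonneg hμ.le (abs_nonneg _)
    linarith
  have hpabs : |p| = -p := abs_of_neg hp
  have habs' : |t| ≤ -σ * p := by rw [hpabs] at habs; linarith
  have htabs : t ≤ |t| := le_abs_self t
  have key1 : (A - μ * t) * t ≤ A * |t| := by
    have h0 : A * t ≤ A * |t| := mul_le_mul_of_nonneg_left htabs hA0.le
    have h1 : 0 ≤ μ * t ^ 2 := mul_nonneg hμ.le (sq_nonneg t)
    nlinarith [h0, h1]
  have key2 : A * |t| * (1 - σ) ≤ σ * G * D := by
    have h1 : |t| * (1 - σ) ≤ σ * D := by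
      have hneg := neg_abs_le t
      nlinarith [abs_nonneg t]
    have h2 : A * (|t| * (1 - σ)) ≤ A * (σ * D) := mul_le_mul_of_nonneg_left h1 hA0.le
    have h3 : A * (σ * D) ≤ G * (σ * D) :=
      mul_le_mul_of_nonneg_right hAG (mul_nonneg hσ0.le hD.le)
    nlinarith [h2, h3]
  have hfrac : (A - μ * t) * t / D ≤ σ * G / (1 - σ) := by
    rw [div_le_div_iff₀ hD h1σ]
    nlinarith [key1, key2]
  have hc0 : 0 < c := by
    rw [hc]
    have : σ / (1 - σ) < 1 := by rw [div_lt_one h1σ]; linarith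
    linarith
  refine ⟨?_, hc0⟩
  have hcg : -c * G = -G + σ * G / (1 - σ) := by rw [hc]; field_simp; ring
  rw [hcg]
  linarith

theorem stmt_2 {n : ℕ} (σ μ α c : ℝ) (hσ : σ ∈ Set.Ioo (0:ℝ) (1/2))
    (hμ : 0 < μ) (hα : 0 < α)
    (gkm1 gk dkm1 : EuclideanSpace ℝ (Fin n))
    (skm1 y : EuclideanSpace ℝ (Fin n))
    (hs : skm1 = α • dkm1) (hy : y = gk - gkm1)
    (hdesc : ⟪gkm1, dkm1⟫ < 0)
    (hswp : |⟪gk, dkm1⟫| ≤ σ * |⟪gkm1, dkm1⟫|)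
    (hcurv : 0 < ⟪dkm1, y⟫)
    (hcase : ‖gk‖^2 > μ * |⟪gk, gkm1⟫|)
    (β : ℝ)
    (hβ : β = (‖gk‖^2 - μ * |⟪gk, gkm1⟫|) / ⟪dkm1, y⟫
              - (μ / α) * (⟪gk, skm1⟫ / ⟪dkm1, y⟫))
    (dk : EuclideanSpace ℝ (Fin n)) (hd : dk = -gk + β • dkm1)
    (hc : c = 1 - σ / (1 - σ)) :
    ⟪gk, dk⟫ ≤ -c * ‖gk‖^2 ∧ 0 < c := by
  have hst : ⟪gk, skm1⟫ = α * ⟪gk, dkm1⟫ := by rw [hs, real_inner_smul_right]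
  have hdiv : ∀ (A t D : ℝ), D ≠ 0 → A / D - μ / α * (α * t / D) = (A - μ * t) / D := by
    intro A t D hD
    field_simp
  have hβ' : β = ((‖gk‖^2 - μ * |⟪gk, gkm1⟫|) - μ * ⟪gk, dkm1⟫) / ⟪dkm1, y⟫ := by
    rw [hβ, hst, hdiv _ _ _ hcurv.ne']
  have hgd : ⟪gk, dk⟫ = -‖gk‖^2 + β * ⟪gk, dkm1⟫ := by
    rw [hd, inner_add_right, inner_neg_right, real_inner_smul_right,
      real_inner_self_eq_norm_sq]
  have hDval : ⟪dkm1, y⟫ = ⟪gk, dkm1⟫ - ⟪gkm1, dkm1⟫ := by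
    rw [hy, inner_sub_right, real_inner_comm dkm1 gk, real_inner_comm dkm1 gkm1]
  have := stmt_2_aux σ μ ⟪gkm1, dkm1⟫ ⟪gk, dkm1⟫ ⟪dkm1, y⟫ (‖gk‖^2) c hσ.1 hσ.2
    hμ hdesc hswp hcurv hDval (by positivity) ⟪gk, gkm1⟫ (by linarith [hcase]) hc
  refine ⟨?_, this.2⟩
  calc ⟪gk, dk⟫ = -‖gk‖^2 + ((‖gk‖^2 - μ * |⟪gk, gkm1⟫|) - μ * ⟪gk, dkm1⟫)
        * ⟪gk, dkm1⟫ / ⟪dkm1, y⟫ := by rw [hgd, hβ']; ring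
    _ ≤ -c * ‖gk‖^2 := this.1
end

section
/- Suppose f : ℝ^n → ℝ has L-Lipschitz continuous gradient g, d_k is a descent direction at x_k (g(x_k)^T d_k < 0), and α_k > 0 satisfies the Wolfe curvature condition g(x_k + α_k d_k)^T d_k ≥ σ g(x_k)^T d_k with σ ∈ (0,1). Then α_k ≥ (1−σ)|g(x_k)^T d_k| / (L‖d_k‖²). -/
open scoped RealInnerProductSpace

theorem stmt_5 {n : ℕ} (f : EuclideanSpace ℝ (Fin n) → ℝ)
    (g : EuclideanSpace ℝ (Fin n) → EuclideanSpace ℝ (Fin n))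
    (hgrad : ∀ x, HasGradientAt f (g x) x)
    (L : ℝ) (hL : 0 < L)
    (hlip : ∀ x y, ‖g x - g y‖ ≤ L * ‖x - y‖)
    (xk dk : EuclideanSpace ℝ (Fin n)) (hdk : dk ≠ 0)
    (hdesc : ⟪g xk, dk⟫ < 0)
    (σ αk : ℝ) (hσ : σ ∈ Set.Ioo (0:ℝ) 1) (hαk : 0 < αk)
    (hcurv : ⟪g (xk + αk • dk), dk⟫ ≥ σ * ⟪g xk, dk⟫) :
    αk ≥ (1 - σ) * |⟪g xk, dk⟫| / (L * ‖dk‖^2) := by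
  have hd : 0 < ‖dk‖ := norm_pos_iff.mpr hdk
  have key : (1 - σ) * (-⟪g xk, dk⟫) ≤ L * αk * ‖dk‖^2 := by
    have h1 : ⟪g (xk + αk • dk) - g xk, dk⟫ ≤ L * (αk * ‖dk‖) * ‖dk‖ := by
      calc ⟪g (xk + αk • dk) - g xk, dk⟫ ≤ ‖g (xk + αk • dk) - g xk‖ * ‖dk‖ :=
            real_inner_le_norm _ _
        _ ≤ (L * ‖(xk + αk • dk) - xk‖) * ‖dk‖ := by
            exact mul_le_mul_of_nonneg_right (hlip _ _) hd.le
        _ = L * (αk * ‖dk‖) * ‖dk‖ := by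
            rw [add_sub_cancel_left, norm_smul, Real.norm_eq_abs, abs_of_pos hαk]
    have h2 : (1 - σ) * (-⟪g xk, dk⟫) ≤ ⟪g (xk + αk • dk) - g xk, dk⟫ := by
      rw [inner_sub_left]
      nlinarith [hcurv]
    nlinarith [h1, h2]
  rw [ge_iff_le, div_le_iff₀ (by positivity)]
  rw [abs_of_neg hdesc]
  nlinarith [key]
end

section
/- Suppose sequences (d_k) and (g_k) in ℝ^n satisfy ‖d_k‖²/‖g_k‖⁴ ≤ R·Σ_{i=1}^{k} 1/‖g_i‖^m for a constant R > 0, and ‖g_i‖ ≥ ε > 0 for all i, with m ∈ ℕ. Then ‖g_k‖⁴/‖d_k‖² ≥ ε^m/(kR) for each k, and hence Σ_{k=1}^∞ ‖g_k‖⁴/‖d_k‖² = ∞. -/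
theorem stmt_13 {n : ℕ} (g d : ℕ → EuclideanSpace ℝ (Fin n))
    (hdne : ∀ k, d k ≠ 0)
    (R ε : ℝ) (hR : 0 < R) (hε : 0 < ε) (m : ℕ)
    (hglb : ∀ k, ‖g k‖ ≥ ε)
    (hbd : ∀ k : ℕ, 1 ≤ k →
      ‖d k‖^2 / ‖g k‖^4 ≤ R * ∑ i ∈ Finset.Icc 1 k, (‖g i‖ ^ m)⁻¹) :
    (∀ k : ℕ, 1 ≤ k → ‖g k‖^4 / ‖d k‖^2 ≥ ε ^ m / (k * R)) ∧
    ¬ Summable (fun k : ℕ => ‖g k‖^4 / ‖d k‖^2) := by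
  have hεm : (0:ℝ) < ε ^ m := pow_pos hε m
  have hgpos : ∀ k, (0:ℝ) < ‖g k‖ := fun k => lt_of_lt_of_le hε (hglb k)
  have key : ∀ k : ℕ, 1 ≤ k → ‖g k‖^4 / ‖d k‖^2 ≥ ε ^ m / (k * R) := by
    intro k hk
    have hdpos : (0:ℝ) < ‖d k‖^2 := pow_pos (norm_pos_iff.mpr (hdne k)) 2
    have hgk4 : (0:ℝ) < ‖g k‖^4 := pow_pos (hgpos k) 4
    have hsum : ∑ i ∈ Finset.Icc 1 k, (‖g i‖ ^ m)⁻¹ ≤ k * (ε ^ m)⁻¹ := by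
      calc ∑ i ∈ Finset.Icc 1 k, (‖g i‖ ^ m)⁻¹
          ≤ ∑ i ∈ Finset.Icc 1 k, (ε ^ m)⁻¹ := by
            apply Finset.sum_le_sum
            intro i _
            exact inv_anti₀ hεm (pow_le_pow_left₀ hε.le (hglb i) m)
        _ = (Finset.Icc 1 k).card * (ε ^ m)⁻¹ := by
            rw [Finset.sum_const, nsmul_eq_mul]
        _ = k * (ε ^ m)⁻¹ := by rw [Nat.card_Icc]; simp
    have hkR : (0:ℝ) < k * R := by
      have : (0:ℝ) < (k:ℝ) := by exact_mod_cast hk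
      positivity
    have h1 : ‖d k‖^2 / ‖g k‖^4 ≤ (k * R) / ε ^ m := by
      calc ‖d k‖^2 / ‖g k‖^4 ≤ R * (k * (ε ^ m)⁻¹) :=
            le_trans (hbd k hk) (by nlinarith [hbd k hk, hsum])
        _ = (k * R) / ε ^ m := by ring
    have h2 : ε ^ m / (k * R) ≤ ‖g k‖^4 / ‖d k‖^2 := by
      rw [div_le_div_iff₀ hkR hdpos]
      rw [div_le_div_iff₀ (by positivity) hεm] at h1
      nlinarith
    exact h2
  refine ⟨key, ?_⟩
  intro hS
  have hcomp : Summable (fun k : ℕ => ε ^ m / (k * R)) := by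
    apply Summable.of_nonneg_of_le (fun k => by positivity) _ hS
    intro k
    rcases Nat.eq_zero_or_pos k with rfl | hk
    · simp
      positivity
    · exact key k hk
  have : Summable (fun k : ℕ => (ε ^ m / R) * (1 / (k:ℝ))) := by
    convert hcomp using 2 with k
    rcases Nat.eq_zero_or_pos k with rfl | hk
    · simp
    · field_simp
  rw [summable_mul_left_iff (by positivity)] at this
  exact Real.not_summable_one_div_natCast this
end
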